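/- For all natural numbers m and n, the balanced quantum binomial ⟨m+n choose m,n⟩_q, a priori an element of the field ℚ(q), is equal to a Laurent polynomial in q with nonnegative integer coefficients; explicitly, it equals ∑_{Y ⊆ {1,…,m+n}, #Y = m} q^{d(Y, {1,…,m+n} \ Y)}, a finite sum of integer powers of q. -/

import Mathlib

noncomputable section

/-- The indeterminate `q` in the field `ℚ(q)` of rational functions over `ℚ`. -/
def q : RatFunc ℚ := RatFunc.X

/-- The balanced quantum integer `[n]_q = (q^n - q^{-n})/(q - q^{-1})`. -/
def qInt (n : ℕ) : RatFunc ℚ := (q ^ (n : ℤ) - q ^ (-(n : ℤ))) / (q - q⁻¹)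

/-- The quantum factorial `[n]_q! = ∏_{j=1}^n [j]_q`. -/
def qFact (n : ℕ) : RatFunc ℚ := ∏ j ∈ Finset.range n, qInt (j + 1)

/-- The balanced quantum binomial `⟨m+n choose m,n⟩_q = [m+n]_q! / ([m]_q! · [n]_q!)`
for natural numbers `m`, `n`. -/
def qBinom (m n : ℕ) : RatFunc ℚ := qFact (m + n) / (qFact m * qFact n)

/-- The degree `d(Y,Z) = #{(y,z) ∈ Y × Z : y < z} − #{(y,z) ∈ Y × Z : y > z}`
of a pair of (disjoint) finite sets of integers. -/
def deg (Y Z : Finset ℤ) : ℤ :=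
  (((Y ×ˢ Z).filter fun p => p.1 < p.2).card : ℤ) -
    (((Y ×ˢ Z).filter fun p => p.2 < p.1).card : ℤ)

/-!
Both sides satisfy the same `q`-Pascal recursion and equal `1` when `m = 0` or `n = 0`.
Algebraically, `[a + b] = q^{-b} [a] + q^a [b]` gives
`⟨m+n+2 choose m+1,n+1⟩ = q^{-(n+1)} ⟨m+n+1 choose m,n+1⟩ + q^{m+1} ⟨m+n+1 choose m+1,n⟩`.
Combinatorially, split the `(m+1)`-subsets `Y` of `{1, …, N+1}` according to whether they
contain the maximum `N+1`: putting it into `Y` lowers the degree by the size `n+1` of the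
complement, putting it into the complement raises the degree by `#Y = m+1`.
-/

theorem deg_eq_sum_sign (Y Z : Finset ℤ) : deg Y Z = ∑ y ∈ Y, ∑ z ∈ Z, Int.sign (z - y) := by
  rw [deg, Finset.card_filter, Finset.card_filter, Finset.sum_product, Finset.sum_product]
  push_cast
  rw [← Finset.sum_sub_distrib]
  refine Finset.sum_congr rfl fun y _ => ?_
  rw [← Finset.sum_sub_distrib]
  refine Finset.sum_congr rfl fun z _ => ?_
  rcases lt_trichotomy y z with h | rfl | h
  · simp [h, h.not_gt, Int.sign_eq_one_of_pos (sub_pos.2 h)]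
  · simp
  · simp [h, h.not_gt, Int.sign_eq_neg_one_of_neg (sub_neg.2 h)]

theorem deg_empty_left (Z : Finset ℤ) : deg ∅ Z = 0 := by simp [deg]

theorem deg_empty_right (Y : Finset ℤ) : deg Y ∅ = 0 := by simp [deg]

theorem deg_insert_right {Y Z : Finset ℤ} {a : ℤ} (ha : a ∉ Z) (hY : ∀ y ∈ Y, y < a) :
    deg Y (insert a Z) = deg Y Z + Y.card := by
  simp only [deg_eq_sum_sign, Finset.sum_insert ha, Finset.sum_add_distrib, add_comm (Int.sign _)]
  rw [Finset.sum_congr rfl fun y hy => Int.sign_eq_one_of_pos (sub_pos.2 (hY y hy))]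
  simp

theorem deg_insert_left {Y Z : Finset ℤ} {a : ℤ} (ha : a ∉ Y) (hZ : ∀ z ∈ Z, z < a) :
    deg (insert a Y) Z = deg Y Z - Z.card := by
  rw [deg_eq_sum_sign, deg_eq_sum_sign, Finset.sum_insert ha,
    Finset.sum_congr rfl fun z hz => Int.sign_eq_neg_one_of_neg (sub_neg.2 (hZ z hz))]
  simp only [Finset.sum_neg_distrib, Finset.sum_const, Int.nsmul_eq_mul, mul_one]
  ring

section subsetDegSum

variable {K : Type*} [Field K]

def subsetDegSum (x : K) (A : Finset ℤ) (m : ℕ) : K :=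
  ∑ Y ∈ A.powersetCard m, x ^ deg Y (A \ Y)

theorem subsetDegSum_zero (x : K) (A : Finset ℤ) : subsetDegSum x A 0 = 1 := by
  simp [subsetDegSum, deg_empty_left]

theorem subsetDegSum_card (x : K) (A : Finset ℤ) : subsetDegSum x A A.card = 1 := by
  simp [subsetDegSum, deg_empty_right]

theorem subsetDegSum_insert_of_forall_lt {x : K} (hx : x ≠ 0) {A : Finset ℤ} {a : ℤ}
    (ha : ∀ b ∈ A, b < a) (m : ℕ) :
    subsetDegSum x (insert a A) (m + 1) =
      x ^ ((m : ℤ) - A.card) * subsetDegSum x A m + x ^ (m + 1) * subsetDegSum x A (m + 1) := by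
  have haA : a ∉ A := fun h => (ha a h).false
  have hdisj : Disjoint (A.powersetCard (m + 1)) ((A.powersetCard m).image (insert a)) := by
    refine Finset.disjoint_left.2 fun Y hY hY' => ?_
    obtain ⟨Y', -, rfl⟩ := Finset.mem_image.1 hY'
    exact haA ((Finset.mem_powersetCard.1 hY).1 (Finset.mem_insert_self a Y'))
  have hinj : Set.InjOn (insert a) (A.powersetCard m : Set (Finset ℤ)) := fun Y hY Y' hY' h => by
    rw [← Finset.erase_insert (fun h => haA ((Finset.mem_powersetCard.1 hY).1 h)), h,
      Finset.erase_insert (fun h => haA ((Finset.mem_powersetCard.1 hY').1 h))]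
  rw [subsetDegSum, Finset.powersetCard_succ_insert haA, Finset.sum_union hdisj,
    Finset.sum_image hinj, add_comm, subsetDegSum, subsetDegSum, Finset.mul_sum, Finset.mul_sum]
  congr 1
  · refine Finset.sum_congr rfl fun Y hY => ?_
    obtain ⟨hYA, hcard⟩ := Finset.mem_powersetCard.1 hY
    have haY : a ∉ Y := fun h => haA (hYA h)
    rw [Finset.insert_sdiff_insert, Finset.sdiff_insert_of_notMem haA,
      deg_insert_left haY fun z hz => ha z (Finset.sdiff_subset hz),
      Finset.cast_card_sdiff hYA, hcard, ← zpow_add₀ hx]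
    congr 1
    ring
  · refine Finset.sum_congr rfl fun Y hY => ?_
    obtain ⟨hYA, hcard⟩ := Finset.mem_powersetCard.1 hY
    rw [Finset.insert_sdiff_of_notMem _ fun h => haA (hYA h),
      deg_insert_right (fun h => haA (Finset.sdiff_subset h)) fun y hy => ha y (hYA hy),
      hcard, zpow_add₀ hx, mul_comm]
    norm_cast

end subsetDegSum

theorem q_ne_zero : q ≠ 0 := RatFunc.X_ne_zero

theorem q_pow_ne_one {k : ℕ} (hk : k ≠ 0) : q ^ k ≠ 1 := by
  intro h
  have hX : (Polynomial.X : Polynomial ℚ) ^ k = 1 :=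
    RatFunc.algebraMap_injective ℚ (by simpa [q, RatFunc.algebraMap_X] using h)
  simpa [hk] using congrArg Polynomial.natDegree hX

theorem q_zpow_sub_zpow_neg_ne_zero {n : ℕ} (hn : n ≠ 0) : q ^ (n : ℤ) - q ^ (-(n : ℤ)) ≠ 0 := by
  rw [sub_ne_zero, zpow_neg, ne_eq, ← mul_eq_one_iff_eq_inv₀ (zpow_ne_zero _ q_ne_zero),
    ← zpow_add₀ q_ne_zero, ← Nat.cast_add, zpow_natCast]
  exact q_pow_ne_one (by omega)

theorem qInt_ne_zero {n : ℕ} (hn : n ≠ 0) : qInt n ≠ 0 :=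
  div_ne_zero (q_zpow_sub_zpow_neg_ne_zero hn)
    (by simpa using q_zpow_sub_zpow_neg_ne_zero one_ne_zero)

theorem qFact_ne_zero (n : ℕ) : qFact n ≠ 0 :=
  Finset.prod_ne_zero_iff.2 fun j _ => qInt_ne_zero j.succ_ne_zero

theorem qFact_zero : qFact 0 = 1 := Finset.prod_range_zero _

theorem qFact_succ (n : ℕ) : qFact (n + 1) = qFact n * qInt (n + 1) := Finset.prod_range_succ _ _

theorem qInt_add (a b : ℕ) : qInt (a + b) = q ^ (-(b : ℤ)) * qInt a + q ^ a * qInt b := by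
  simp only [qInt, Nat.cast_add, ← mul_div_assoc, ← add_div, mul_sub, ← zpow_natCast q a,
    ← zpow_add₀ q_ne_zero]
  ring_nf

theorem qBinom_zero_left (n : ℕ) : qBinom 0 n = 1 := by
  rw [qBinom, zero_add, qFact_zero, one_mul, div_self (qFact_ne_zero n)]

theorem qBinom_zero_right (m : ℕ) : qBinom m 0 = 1 := by
  rw [qBinom, add_zero, qFact_zero, mul_one, div_self (qFact_ne_zero m)]

theorem qBinom_succ_succ (m n : ℕ) :
    qBinom (m + 1) (n + 1) =
      q ^ (-(n + 1 : ℤ)) * qBinom m (n + 1) + q ^ (m + 1) * qBinom (m + 1) n := by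
  have hsum : m + 1 + (n + 1) = m + n + 1 + 1 := by omega
  rw [qBinom, qBinom, qBinom, hsum, show m + (n + 1) = m + n + 1 by omega,
    show m + 1 + n = m + n + 1 by omega, qFact_succ (m + n + 1), ← hsum, qInt_add,
    qFact_succ m, qFact_succ n]
  have hm := qFact_ne_zero m
  have hn := qFact_ne_zero n
  have hm' := qInt_ne_zero m.succ_ne_zero
  have hn' := qInt_ne_zero n.succ_ne_zero
  field_simp
  push_cast
  ring

theorem Int.insert_Icc_add_one_right {a b : ℤ} (h : a ≤ b + 1) :
    insert (b + 1) (Finset.Icc a b) = Finset.Icc a (b + 1) := by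
  simpa using Finset.insert_Icc_right_eq_Icc_succ (a := a) (b := b) (by simpa using h)

theorem qBinom_eq_subsetDegSum (m n : ℕ) :
    qBinom m n = subsetDegSum q (Finset.Icc 1 ((m + n : ℕ) : ℤ)) m := by
  induction m generalizing n with
  | zero => rw [qBinom_zero_left, subsetDegSum_zero]
  | succ m ihm =>
    induction n with
    | zero =>
      simpa [qBinom_zero_right] using (subsetDegSum_card q (Finset.Icc 1 ((m + 1 : ℕ) : ℤ))).symm
    | succ n ihn =>
      have hIcc : Finset.Icc (1 : ℤ) ((m + 1 + (n + 1) : ℕ) : ℤ) =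
          insert (((m + n + 1 : ℕ) : ℤ) + 1) (Finset.Icc 1 ((m + n + 1 : ℕ) : ℤ)) := by
        rw [Int.insert_Icc_add_one_right (by omega)]
        congr 1
        omega
      rw [qBinom_succ_succ, ihm, ihn, hIcc, subsetDegSum_insert_of_forall_lt q_ne_zero
        (fun b hb => by rw [Finset.mem_Icc] at hb; omega), Int.card_Icc, show m + (n + 1) = m + n + 1 by omega,
        show m + 1 + n = m + n + 1 by omega]
      congr 3
      simp only [add_sub_cancel_right, Int.toNat_natCast]
      omega

theorem Finset.exists_finsupp_sum_comp_eq {ι α M : Type*} [AddCommMonoid M] (s : Finset ι)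
    (f : ι → α) (g : α → M) : ∃ c : α →₀ ℕ, ∑ i ∈ s, g (f i) = ∑ a ∈ c.support, c a • g a := by
  classical
  refine ⟨Multiset.toFinsupp (s.val.map f), ?_⟩
  calc ∑ i ∈ s, g (f i) = ((s.val.map f).map g).sum := by rw [Multiset.map_map]; rfl
    _ = _ := Finset.sum_multiset_map_count _ _

/-- The balanced quantum binomial `⟨m+n choose m,n⟩_q` equals the explicit Laurent
polynomial `∑_{Y ⊆ {1,…,m+n}, #Y = m} q^{d(Y, {1,…,m+n} \ Y)}`; in particular it is a
Laurent polynomial in `q` with nonnegative integer coefficients. -/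
theorem qBinom_laurent (m n : ℕ) :
    qBinom m n =
      (∑ Y ∈ (Finset.Icc (1 : ℤ) (m + n)).powersetCard m,
        q ^ deg Y (Finset.Icc (1 : ℤ) (m + n) \ Y)) ∧
    ∃ c : ℤ →₀ ℕ, qBinom m n = ∑ k ∈ c.support, (c k : RatFunc ℚ) * q ^ k := by
  have hsum : qBinom m n = ∑ Y ∈ (Finset.Icc (1 : ℤ) (m + n)).powersetCard m,
      q ^ deg Y (Finset.Icc (1 : ℤ) (m + n) \ Y) := by
    rw [qBinom_eq_subsetDegSum, subsetDegSum, Nat.cast_add]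
  obtain ⟨c, hc⟩ := Finset.exists_finsupp_sum_comp_eq _
    (fun Y => deg Y (Finset.Icc (1 : ℤ) (m + n) \ Y)) (q ^ ·)
  exact ⟨hsum, c, by simpa only [hsum, nsmul_eq_mul] using hc⟩
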